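/- arXiv:1607.06483 — 6 statements merged into one kernel-verified Lean document; each statement's English description precedes it below -/
import Mathlib

section
/- Let m ≥ 1 and let u : ℝ^{m+1} → ℝ be bounded on the closed upper half space H = {x ∈ ℝ^{m+1} : x_{m+1} ≥ 0}, continuous on H, harmonic on the open half space {x : x_{m+1} > 0}, and equal to 0 at every point of the boundary hyperplane {x : x_{m+1} = 0}. Then u vanishes identically on H. (Dirichlet parabolicity of the closed Euclidean half space.) -/
/-!
For `ε, δ > 0` the barrier `q = ε y_k + δ ‖y‖² - (n + 1) δ y_k²` has `Δq = -2δ`, is nonnegative on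
the hyperplane `y_k = 0`, and exceeds any given bound `C` on the rest of the boundary of the
truncated half space `{0 < y_k < R, ‖y‖ < ρ}` once `R` and then `ρ` are large. So if `u ≤ C` is
subharmonic and `u ≤ 0` on the hyperplane, the maximum principle for the strictly subharmonic
function `u - q` gives `u ≤ q ≤ ε y_k + δ ‖y‖²`; letting `δ → 0` and then `ε → 0` gives `u ≤ 0`.
Applied to `u` and `-u` this gives the theorem.
-/

noncomputable def lap {n : ℕ} (u : EuclideanSpace ℝ (Fin n) → ℝ)
    (x : EuclideanSpace ℝ (Fin n)) : ℝ :=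
  ∑ i : Fin n,
    fderiv ℝ (fun y => fderiv ℝ u y (EuclideanSpace.single i 1)) x (EuclideanSpace.single i 1)

def IsHarmonicOn {n : ℕ} (u : EuclideanSpace ℝ (Fin n) → ℝ)
    (U : Set (EuclideanSpace ℝ (Fin n))) : Prop :=
  ContDiffOn ℝ 2 u U ∧ ∀ x ∈ U, lap u x = 0

open Filter Topology

theorem IsLocalMax.deriv_deriv_nonpos {f : ℝ → ℝ} {x₀ : ℝ} (h : IsLocalMax f x₀)
    (hc : ContinuousAt f x₀) : deriv (deriv f) x₀ ≤ 0 := by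
  by_contra! hpos
  -- the second derivative test would make `x₀` a local minimum too, so `f` is locally constant
  have hmin := isLocalMin_of_deriv_deriv_pos hpos h.deriv_eq_zero hc
  have hconst : f =ᶠ[𝓝 x₀] fun _ => f x₀ :=
    (hmin.and h).mono fun y hy => le_antisymm hy.2 hy.1
  have hderiv : deriv f =ᶠ[𝓝 x₀] fun _ => 0 :=
    hconst.eventuallyEq_nhds.mono fun y hy => by rw [hy.deriv_eq, deriv_const]
  rw [hderiv.deriv_eq, deriv_const] at hpos
  exact lt_irrefl _ hpos

theorem IsLocalMax.fderiv_fderiv_apply_self_nonpos {E : Type*} [NormedAddCommGroup E]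
    [NormedSpace ℝ E] {f : E → ℝ} {x : E} (hmax : IsLocalMax f x) (hf : ContDiffAt ℝ 2 f x)
    (e : E) : fderiv ℝ (fun y => fderiv ℝ f y e) x e ≤ 0 := by
  set line : ℝ → E := fun t => x + t • e
  have hline : ∀ t, HasDerivAt line e t := fun t => by
    simpa [line] using ((hasDerivAt_id t).smul_const e).const_add x
  have hline0 : line 0 = x := by simp [line]
  rw [← hline0] at hmax hf ⊢
  have hnear : ∀ᶠ t in 𝓝 (0 : ℝ), DifferentiableAt ℝ f (line t) :=
    (hline 0).continuousAt.eventually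
      ((hf.eventually (by simp)).mono fun y hy => hy.differentiableAt (by simp))
  have hderiv : deriv (f ∘ line) =ᶠ[𝓝 0] fun t => fderiv ℝ f (line t) e :=
    hnear.mono fun t ht => (ht.hasFDerivAt.comp_hasDerivAt t (hline t)).deriv
  have hsecond : HasDerivAt (fun t => fderiv ℝ f (line t) e)
      (fderiv ℝ (fun y => fderiv ℝ f y e) (line 0) e) 0 :=
    (((hf.fderiv_right (m := 1) le_rfl).differentiableAt one_ne_zero).clm_apply
      (differentiableAt_const e)).hasFDerivAt.comp_hasDerivAt 0 (hline 0)
  have hmax' := (hmax.comp_continuous (hline 0).continuousAt).deriv_deriv_nonpos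
    (hf.continuousAt.comp (hline 0).continuousAt)
  rwa [hderiv.deriv_eq, hsecond.deriv] at hmax'

section

variable {n : ℕ}

theorem IsLocalMax.lap_nonpos {u : EuclideanSpace ℝ (Fin n) → ℝ} {x : EuclideanSpace ℝ (Fin n)}
    (hmax : IsLocalMax u x) (hu : ContDiffAt ℝ 2 u x) : lap u x ≤ 0 :=
  Finset.sum_nonpos fun _ _ => hmax.fderiv_fderiv_apply_self_nonpos hu _

theorem lap_neg (u : EuclideanSpace ℝ (Fin n) → ℝ) (x : EuclideanSpace ℝ (Fin n)) :
    lap (fun y => -u y) x = -lap u x := by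
  simp only [lap, fderiv_fun_neg, neg_apply, Finset.sum_neg_distrib]

theorem lap_sub {u v : EuclideanSpace ℝ (Fin n) → ℝ} {x : EuclideanSpace ℝ (Fin n)}
    (hu : ContDiffAt ℝ 2 u x) (hv : ContDiffAt ℝ 2 v x) :
    lap (fun y => u y - v y) x = lap u x - lap v x := by
  have hnear : ∀ᶠ y in 𝓝 x, DifferentiableAt ℝ u y ∧ DifferentiableAt ℝ v y :=
    ((hu.eventually (by simp)).and (hv.eventually (by simp))).mono fun y hy =>
      ⟨hy.1.differentiableAt (by simp), hy.2.differentiableAt (by simp)⟩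
  have hpartial : ∀ {f : EuclideanSpace ℝ (Fin n) → ℝ}, ContDiffAt ℝ 2 f x → ∀ e,
      DifferentiableAt ℝ (fun y => fderiv ℝ f y e) x := fun hf e =>
    ((hf.fderiv_right (m := 1) le_rfl).differentiableAt one_ne_zero).clm_apply
      (differentiableAt_const e)
  simp only [lap, ← Finset.sum_sub_distrib]
  refine Finset.sum_congr rfl fun i _ => ?_
  have hev : (fun y => fderiv ℝ (fun z => u z - v z) y (EuclideanSpace.single i 1)) =ᶠ[𝓝 x]
      fun y =>
        fderiv ℝ u y (EuclideanSpace.single i 1) - fderiv ℝ v y (EuclideanSpace.single i 1) :=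
    hnear.mono fun y hy => by dsimp only; rw [fderiv_fun_sub hy.1 hy.2]; rfl
  rw [hev.fderiv_eq, fderiv_fun_sub (hpartial hu _) (hpartial hv _)]
  rfl

theorem lap_add_sum_mul_sq (ℓ : EuclideanSpace ℝ (Fin n) →L[ℝ] ℝ) (d : Fin n → ℝ)
    (x : EuclideanSpace ℝ (Fin n)) :
    lap (fun y => ℓ y + ∑ i, d i * y i ^ 2) x = 2 * ∑ i, d i := by
  have hfirst : ∀ y e : EuclideanSpace ℝ (Fin n),
      fderiv ℝ (fun y => ℓ y + ∑ i, d i * y i ^ 2) y e = ℓ e + ∑ i, 2 * d i * y i * e i := by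
    intro y e
    have : HasFDerivAt (fun y : EuclideanSpace ℝ (Fin n) => ℓ y + ∑ i, d i * y i ^ 2)
        (ℓ + ∑ i, (2 * d i * y i) • EuclideanSpace.proj i) y := by
      refine ℓ.hasFDerivAt.add (HasFDerivAt.fun_sum fun i _ => ?_)
      refine ((((EuclideanSpace.proj (𝕜 := ℝ) i).hasFDerivAt).pow 2).const_mul
        (d i)).congr_fderiv ?_
      rw [smul_smul, PiLp.proj_apply]
      ring_nf
    rw [this.fderiv]
    simp only [add_apply, sum_apply, smul_apply, PiLp.proj_apply, smul_eq_mul]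
  have hsecond : ∀ e : EuclideanSpace ℝ (Fin n),
      fderiv ℝ (fun y => fderiv ℝ (fun y => ℓ y + ∑ i, d i * y i ^ 2) y e) x e =
        ∑ i, 2 * d i * e i * e i := by
    intro e
    simp_rw [hfirst]
    have : HasFDerivAt (fun y : EuclideanSpace ℝ (Fin n) => ℓ e + ∑ i, 2 * d i * y i * e i)
        (∑ i, (2 * d i * e i) • EuclideanSpace.proj (𝕜 := ℝ) i) x := by
      refine (HasFDerivAt.fun_sum fun i _ => ?_).const_add (ℓ e)
      refine ((((EuclideanSpace.proj (𝕜 := ℝ) i).hasFDerivAt).const_mul (2 * d i)).mul_const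
        (e i)).congr_fderiv ?_
      rw [smul_smul, mul_comm]
    rw [this.fderiv]
    simp
  simp only [lap, hsecond, Finset.mul_sum]
  refine Finset.sum_congr rfl fun j _ => ?_
  rw [Finset.sum_eq_single j]
  · simp
  · intro i _ hij
    simp [hij]
  · simp

theorem nonpos_of_lap_pos_of_nonpos_on_frontier {Ω : Set (EuclideanSpace ℝ (Fin n))}
    (hΩ : IsOpen Ω) (hΩb : Bornology.IsBounded Ω) {w : EuclideanSpace ℝ (Fin n) → ℝ}
    (hw : ContinuousOn w (closure Ω)) (hw2 : ContDiffOn ℝ 2 w Ω) (hlap : ∀ x ∈ Ω, 0 < lap w x)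
    (hfr : ∀ x ∈ frontier Ω, w x ≤ 0) {x : EuclideanSpace ℝ (Fin n)} (hx : x ∈ closure Ω) :
    w x ≤ 0 := by
  obtain ⟨z, hz, hmax⟩ := hΩb.isCompact_closure.exists_isMaxOn ⟨x, hx⟩ hw
  refine (hmax hx).trans ?_
  by_cases hzΩ : z ∈ Ω
  · have hloc : IsLocalMax w z := (hmax.on_subset subset_closure).isLocalMax (hΩ.mem_nhds hzΩ)
    exact absurd (hloc.lap_nonpos (hw2.contDiffAt (hΩ.mem_nhds hzΩ))) (hlap z hzΩ).not_ge
  · exact hfr z (hΩ.frontier_eq ▸ ⟨hz, hzΩ⟩)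

noncomputable def halfSpaceBarrier (k : Fin n) (ε δ : ℝ) (y : EuclideanSpace ℝ (Fin n)) : ℝ :=
  ε * y k + δ * ‖y‖ ^ 2 - (n + 1) * δ * y k ^ 2

theorem halfSpaceBarrier_eq (k : Fin n) (ε δ : ℝ) :
    halfSpaceBarrier k ε δ = fun y => (ε • EuclideanSpace.proj (𝕜 := ℝ) k) y +
      ∑ i, (δ - if i = k then (n + 1) * δ else 0) * y i ^ 2 := by
  ext y
  simp only [halfSpaceBarrier, EuclideanSpace.real_norm_sq_eq, Finset.mul_sum, smul_apply,
    PiLp.proj_apply, smul_eq_mul, sub_mul, ite_mul, zero_mul, Finset.sum_sub_distrib,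
    Finset.sum_ite_eq', Finset.mem_univ, ↓reduceIte]
  ring

theorem contDiff_halfSpaceBarrier (k : Fin n) (ε δ : ℝ) :
    ContDiff ℝ 2 (halfSpaceBarrier k ε δ) := by
  rw [halfSpaceBarrier_eq]
  fun_prop

theorem lap_halfSpaceBarrier (k : Fin n) (ε δ : ℝ) (x : EuclideanSpace ℝ (Fin n)) :
    lap (halfSpaceBarrier k ε δ) x = -2 * δ := by
  rw [halfSpaceBarrier_eq, lap_add_sum_mul_sq]
  simp only [Finset.sum_sub_distrib, Finset.sum_const, Finset.card_univ, Fintype.card_fin,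
    nsmul_eq_mul, Finset.sum_ite_eq', Finset.mem_univ, ↓reduceIte]
  ring

theorem le_halfSpaceBarrier {u : EuclideanSpace ℝ (Fin n) → ℝ} {k : Fin n} {C ε δ R ρ : ℝ}
    (hcont : ContinuousOn u {y | 0 ≤ y k}) (hu : ContDiffOn ℝ 2 u {y | 0 < y k})
    (hlap : ∀ y, 0 < y k → 0 ≤ lap u y) (hC : ∀ y, 0 ≤ y k → u y ≤ C)
    (hzero : ∀ y, y k = 0 → u y ≤ 0) (hε : 0 ≤ ε) (hδ : 0 < δ)
    (hR : C + (n + 1) * δ * R ^ 2 ≤ ε * R) (hρ : C + (n + 1) * δ * R ^ 2 ≤ δ * ρ ^ 2)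
    {x : EuclideanSpace ℝ (Fin n)} (hxk : 0 < x k) (hxR : x k < R) (hxρ : ‖x‖ < ρ) :
    u x ≤ halfSpaceBarrier k ε δ x := by
  set Ω : Set (EuclideanSpace ℝ (Fin n)) := {y | 0 < y k ∧ y k < R ∧ ‖y‖ < ρ}
  have hcoord : Continuous fun y : EuclideanSpace ℝ (Fin n) => y k :=
    (EuclideanSpace.proj (𝕜 := ℝ) k).continuous
  have hΩ : IsOpen Ω :=
    (isOpen_lt continuous_const hcoord).inter
      ((isOpen_lt hcoord continuous_const).inter (isOpen_lt continuous_norm continuous_const))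
  have hΩb : Bornology.IsBounded Ω :=
    Metric.isBounded_ball.subset fun y hy => mem_ball_zero_iff.2 hy.2.2
  have hclosure : closure Ω ⊆ {y | 0 ≤ y k ∧ y k ≤ R ∧ ‖y‖ ≤ ρ} :=
    closure_minimal (fun y hy => ⟨hy.1.le, hy.2.1.le, hy.2.2.le⟩)
      ((isClosed_le continuous_const hcoord).inter
        ((isClosed_le hcoord continuous_const).inter
          (isClosed_le continuous_norm continuous_const)))
  have hq := contDiff_halfSpaceBarrier k ε δ
  have hfr : ∀ y ∈ frontier Ω, u y - halfSpaceBarrier k ε δ y ≤ 0 := by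
    intro y hy
    rw [hΩ.frontier_eq] at hy
    obtain ⟨hy0, hyR, hyρ⟩ := hclosure hy.1
    have hboundary : y k = 0 ∨ y k = R ∨ ‖y‖ = ρ := by
      by_contra! h
      exact hy.2 ⟨hy0.lt_of_ne' h.1, hyR.lt_of_ne h.2.1, hyρ.lt_of_ne h.2.2⟩
    have hyC := hC y hy0
    rw [halfSpaceBarrier, sub_nonpos]
    rcases hboundary with h | h | h
    · rw [h]; nlinarith [hzero y h]
    · rw [h]; nlinarith
    · have hyk : (n + 1) * δ * y k ^ 2 ≤ (n + 1) * δ * R ^ 2 := by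
        gcongr
      rw [h]; nlinarith [mul_nonneg hε hy0]
  refine sub_nonpos.1 <| nonpos_of_lap_pos_of_nonpos_on_frontier
    (w := fun y => u y - halfSpaceBarrier k ε δ y) hΩ hΩb
    ((hcont.mono fun y hy => (hclosure hy).1).sub hq.continuous.continuousOn)
    ((hu.mono fun y hy => hy.1).sub hq.contDiffOn)
    (fun y hy => by
      rw [lap_sub (hu.contDiffAt ((isOpen_lt continuous_const hcoord).mem_nhds hy.1)) hq.contDiffAt,
        lap_halfSpaceBarrier]
      linarith [hlap y hy.1])
    hfr (subset_closure ⟨hxk, hxR, hxρ⟩)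

theorem nonpos_of_lap_nonneg_of_bddAbove_halfSpace {u : EuclideanSpace ℝ (Fin n) → ℝ}
    {k : Fin n} (hcont : ContinuousOn u {y | 0 ≤ y k}) (hu : ContDiffOn ℝ 2 u {y | 0 < y k})
    (hlap : ∀ y, 0 < y k → 0 ≤ lap u y) (hbdd : ∃ C, ∀ y, 0 ≤ y k → u y ≤ C)
    (hzero : ∀ y, y k = 0 → u y ≤ 0) {x : EuclideanSpace ℝ (Fin n)} (hx : 0 ≤ x k) :
    u x ≤ 0 := by
  obtain ⟨C, hC⟩ := hbdd
  rcases hx.eq_or_lt with hx0 | hxk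
  · exact hzero x hx0.symm
  have hε : ∀ ε > 0, u x ≤ ε * x k := by
    intro ε hε
    obtain ⟨R, hxR, hCR⟩ : ∃ R, x k < R ∧ C < ε * R :=
      ((eventually_gt_atTop (x k)).and
        ((tendsto_id.const_mul_atTop hε).eventually_gt_atTop C)).exists
    have hsmall : ∀ᶠ δ in 𝓝 (0 : ℝ), C + (n + 1) * δ * R ^ 2 ≤ ε * R := by
      have : Tendsto (fun δ : ℝ => C + (n + 1) * δ * R ^ 2) (𝓝 0) (𝓝 C) :=
        (by fun_prop : Continuous fun δ : ℝ => C + (n + 1) * δ * R ^ 2).tendsto' 0 _ (by simp)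
      exact this.eventually (eventually_le_nhds hCR)
    have hδ : ∀ᶠ δ in 𝓝[>] (0 : ℝ), u x ≤ ε * x k + δ * ‖x‖ ^ 2 := by
      filter_upwards [self_mem_nhdsWithin, nhdsWithin_le_nhds hsmall] with δ (hδ : 0 < δ) hδR
      obtain ⟨ρ, hxρ, hρ⟩ : ∃ ρ, ‖x‖ < ρ ∧ C + (n + 1) * δ * R ^ 2 ≤ δ * ρ ^ 2 :=
        ((eventually_gt_atTop ‖x‖).and
          (((tendsto_pow_atTop two_ne_zero).const_mul_atTop hδ).eventually_ge_atTop _)).exists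
      calc u x ≤ halfSpaceBarrier k ε δ x :=
            le_halfSpaceBarrier hcont hu hlap hC hzero hε.le hδ hδR hρ hxk hxR hxρ
        _ ≤ ε * x k + δ * ‖x‖ ^ 2 := by
            have : 0 ≤ (n + 1) * δ * x k ^ 2 := by positivity
            rw [halfSpaceBarrier]; linarith
    have hlim : Tendsto (fun δ : ℝ => ε * x k + δ * ‖x‖ ^ 2) (𝓝[>] 0) (𝓝 (ε * x k)) :=
      ((by fun_prop : Continuous fun δ : ℝ => ε * x k + δ * ‖x‖ ^ 2).tendsto' 0 _
        (by simp)).mono_left nhdsWithin_le_nhds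
    exact ge_of_tendsto hlim hδ
  have hlim : Tendsto (fun ε : ℝ => ε * x k) (𝓝[>] 0) (𝓝 0) :=
    ((continuous_mul_const (x k)).tendsto' 0 0 (zero_mul _)).mono_left nhdsWithin_le_nhds
  exact ge_of_tendsto hlim (eventually_nhdsWithin_of_forall hε)

end

theorem dirichlet_parabolicity_halfspace_general (m : ℕ)
    (u : EuclideanSpace ℝ (Fin (m + 1)) → ℝ)
    (H : Set (EuclideanSpace ℝ (Fin (m + 1))))
    (hH : H = {x : EuclideanSpace ℝ (Fin (m + 1)) | 0 ≤ x (Fin.last m)})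
    (hbd : ∃ C : ℝ, ∀ x ∈ H, |u x| ≤ C)
    (hcont : ContinuousOn u H)
    (hharm : IsHarmonicOn u {x : EuclideanSpace ℝ (Fin (m + 1)) | 0 < x (Fin.last m)})
    (hzero : ∀ x : EuclideanSpace ℝ (Fin (m + 1)), x (Fin.last m) = 0 → u x = 0) :
    ∀ x ∈ H, u x = 0 := by
  subst hH
  obtain ⟨C, hC⟩ := hbd
  intro x hx
  have hle : u x ≤ 0 :=
    nonpos_of_lap_nonneg_of_bddAbove_halfSpace hcont hharm.1 (fun y hy => (hharm.2 y hy).ge)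
      ⟨C, fun y hy => (le_abs_self _).trans (hC y hy)⟩ (fun y hy => (hzero y hy).le) hx
  have hge : -u x ≤ 0 :=
    nonpos_of_lap_nonneg_of_bddAbove_halfSpace (u := fun y => -u y) hcont.neg hharm.1.neg
      (fun y hy => by rw [lap_neg, hharm.2 y hy, neg_zero])
      ⟨C, fun y hy => (neg_le_abs _).trans (hC y hy)⟩ (fun y hy => by simp [hzero y hy]) hx
  linarith

/-- Dirichlet parabolicity of the closed Euclidean half space: a bounded continuous function on
the closed upper half space of `ℝ^{m+1}` which is harmonic in the open half space and vanishes
on the boundary hyperplane vanishes identically. -/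
theorem dirichlet_parabolicity_halfspace (m : ℕ) (hm : 1 ≤ m)
    (u : EuclideanSpace ℝ (Fin (m + 1)) → ℝ)
    (H : Set (EuclideanSpace ℝ (Fin (m + 1))))
    (hH : H = {x : EuclideanSpace ℝ (Fin (m + 1)) | 0 ≤ x (Fin.last m)})
    (hbd : ∃ C : ℝ, ∀ x ∈ H, |u x| ≤ C)
    (hcont : ContinuousOn u H)
    (hharm : IsHarmonicOn u {x : EuclideanSpace ℝ (Fin (m + 1)) | 0 < x (Fin.last m)})
    (hzero : ∀ x : EuclideanSpace ℝ (Fin (m + 1)), x (Fin.last m) = 0 → u x = 0) :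
    ∀ x ∈ H, u x = 0 :=
  dirichlet_parabolicity_halfspace_general m u H hH hbd hcont hharm hzero
end

section
/- Let m ≥ 1 and let u : ℝ^{m+1} → ℝ be bounded on the closed upper half space H = {x : x_{m+1} ≥ 0}, continuous on H, C² on the open half space {x : x_{m+1} > 0} with Δu ≥ 0 there. Then sup_{x ∈ H} u(x) = sup_{x : x_{m+1} = 0} u(x); i.e., a bounded continuous subharmonic function on the closed half space attains its supremum on the boundary hyperplane. (Ahlfors maximum principle for bounded subharmonic functions on the Dirichlet parabolic half space.) -/
open Filter Topology InnerProductSpace Laplacian Metric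

theorem le_of_forall_pos_le_add_mul {a b c : ℝ} (h : ∀ δ > 0, a ≤ b + δ * c) : a ≤ b := by
  have : Tendsto (fun δ => b + δ * c) (𝓝[>] 0) (𝓝 b) := by
    have : Continuous fun δ => b + δ * c := by fun_prop
    simpa using tendsto_nhdsWithin_of_tendsto_nhds (this.tendsto 0)
  exact ge_of_tendsto this (eventually_nhdsWithin_of_forall h)

section SecondDerivative

variable {E : Type*} [NormedAddCommGroup E] {w : E → ℝ} {x : E}

theorem ContDiffAt.iteratedFDeriv_two_apply_self [NormedSpace ℝ E] (hw : ContDiffAt ℝ 2 w x)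
    (e : E) : iteratedFDeriv ℝ 2 w x ![e, e] = fderiv ℝ (fun y => fderiv ℝ w y e) x e := by
  have hdw : DifferentiableAt ℝ (fderiv ℝ w) x :=
    (hw.fderiv_right (m := 1) le_rfl).differentiableAt one_ne_zero
  simp [iteratedFDeriv_two_apply, fderiv_clm_apply hdw (differentiableAt_const e)]

theorem IsLocalMax.fderiv_fderiv_apply_nonpos [NormedSpace ℝ E] (hx : IsLocalMax w x)
    (hw : ContDiffAt ℝ 2 w x) (e : E) : fderiv ℝ (fun y => fderiv ℝ w y e) x e ≤ 0 := by
  set g : ℝ → ℝ := fun t => w (x + t • e)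
  have hline : ∀ t : ℝ, HasDerivAt (fun t : ℝ => x + t • e) e t := fun t => by
    simpa using ((hasDerivAt_id t).smul_const e).const_add x
  have hline0 : Tendsto (fun t : ℝ => x + t • e) (𝓝 0) (𝓝 x) := by
    simpa using (hline 0).continuousAt.tendsto
  have hg' : deriv g =ᶠ[𝓝 0] fun t => fderiv ℝ w (x + t • e) e := by
    filter_upwards [hline0.eventually (hw.eventually (by simp))] with t ht
    exact ((ht.differentiableAt two_ne_zero).hasFDerivAt.comp_hasDerivAt t (hline t)).deriv
  have hφ : DifferentiableAt ℝ (fun y => fderiv ℝ w y e) x :=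
    ((hw.fderiv_right (m := 1) le_rfl).differentiableAt one_ne_zero).clm_apply
      (differentiableAt_const e)
  have hg'' : deriv (deriv g) 0 = fderiv ℝ (fun y => fderiv ℝ w y e) x e := by
    rw [hg'.deriv_eq]
    exact (hφ.hasFDerivAt.comp_hasDerivAt_of_eq 0 (hline 0) (by simp)).deriv
  have hmax : IsLocalMax g 0 :=
    IsLocalMax.comp_continuous (g := fun t : ℝ => x + t • e) (by simpa using hx)
      (hline 0).continuousAt
  by_contra! hpos
  -- A positive second derivative makes `0` also a local minimum, so `g` is locally constant.
  have hmin : IsLocalMin g 0 :=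
    isLocalMin_of_deriv_deriv_pos (hg'' ▸ hpos) hmax.deriv_eq_zero
      (hw.continuousAt.comp_of_eq (hline 0).continuousAt (by simp))
  have hconst : g =ᶠ[𝓝 0] fun _ => g 0 :=
    (hmin.and hmax).mono fun t ht => le_antisymm ht.2 ht.1
  have : deriv (deriv g) 0 = 0 := by
    rw [hconst.deriv.deriv_eq]
    simp
  linarith

theorem IsLocalMax.laplacian_nonpos [InnerProductSpace ℝ E] [FiniteDimensional ℝ E]
    (hx : IsLocalMax w x) (hw : ContDiffAt ℝ 2 w x) : Δ w x ≤ 0 := by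
  rw [laplacian_eq_iteratedFDeriv_stdOrthonormalBasis]
  exact Finset.sum_nonpos fun i _ =>
    hw.iteratedFDeriv_two_apply_self _ ▸ hx.fderiv_fderiv_apply_nonpos hw _

end SecondDerivative

variable {n : ℕ}

theorem ContDiffAt.lap_eq_laplacian {w : EuclideanSpace ℝ (Fin n) → ℝ}
    {x : EuclideanSpace ℝ (Fin n)} (hw : ContDiffAt ℝ 2 w x) : lap w x = Δ w x := by
  rw [laplacian_eq_iteratedFDeriv_orthonormalBasis w (EuclideanSpace.basisFun (Fin n) ℝ)]
  simp [lap, hw.iteratedFDeriv_two_apply_self]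

-- `‖y‖²` contributes `2n` to the Laplacian and `(n + 1) y_i (T - y_i)` contributes `-2(n + 1)`.
noncomputable def slabBarrier (i : Fin n) (ε δ T : ℝ) (y : EuclideanSpace ℝ (Fin n)) : ℝ :=
  ε * y i + δ * (‖y‖ ^ 2 + (n + 1) * (y i * (T - y i)))

section slabBarrier

variable (i : Fin n) (ε δ T : ℝ)

theorem contDiff_slabBarrier : ContDiff ℝ 2 (slabBarrier i ε δ T) := by
  have := contDiff_norm_sq ℝ (E := EuclideanSpace ℝ (Fin n)) (n := 2)
  unfold slabBarrier
  fun_prop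

theorem fderiv_slabBarrier_apply (y e : EuclideanSpace ℝ (Fin n)) :
    fderiv ℝ (slabBarrier i ε δ T) y e =
      ε * e i + δ * (2 * inner ℝ y e + (n + 1) * (T - 2 * y i) * e i) := by
  have hi := PiLp.hasFDerivAt_apply (𝕜 := ℝ) 2 y i
  have : HasFDerivAt (slabBarrier i ε δ T) _ y :=
    (hi.const_mul ε).fun_add (((hasStrictFDerivAt_norm_sq y).hasFDerivAt.fun_add
      ((hi.fun_mul (hi.const_sub T)).const_mul (n + 1 : ℝ))).const_mul δ)
  rw [this.fderiv]
  simp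
  ring

theorem fderiv_fderiv_slabBarrier_apply (x e : EuclideanSpace ℝ (Fin n)) :
    fderiv ℝ (fun y => fderiv ℝ (slabBarrier i ε δ T) y e) x e =
      2 * δ * (‖e‖ ^ 2 - (n + 1) * e i ^ 2) := by
  simp_rw [fderiv_slabBarrier_apply, real_inner_comm e]
  have hi := PiLp.hasFDerivAt_apply (𝕜 := ℝ) 2 x i
  have he : HasFDerivAt (fun y => inner ℝ e y) (innerSL ℝ e) x := (innerSL ℝ e).hasFDerivAt
  have := (((he.const_mul 2).fun_add
    (((hi.const_mul 2).const_sub T).const_mul (n + 1 : ℝ) |>.mul_const (e i))).const_mul δ)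
    |>.const_add (ε * e i)
  rw [this.fderiv]
  simp
  ring

theorem laplacian_slabBarrier (x : EuclideanSpace ℝ (Fin n)) :
    Δ (slabBarrier i ε δ T) x = -2 * δ := by
  rw [← (contDiff_slabBarrier i ε δ T).contDiffAt.lap_eq_laplacian]
  simp [lap, fderiv_fderiv_slabBarrier_apply, Finset.sum_sub_distrib, ← Finset.mul_sum]

variable {i δ T}

theorem le_slabBarrier (hδ : 0 ≤ δ) {y : EuclideanSpace ℝ (Fin n)}
    (hy₀ : 0 ≤ y i) (hyT : y i ≤ T) : ε * y i + δ * ‖y‖ ^ 2 ≤ slabBarrier i ε δ T y := by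
  have : 0 ≤ δ * ((n + 1) * (y i * (T - y i))) := by
    have := mul_nonneg hy₀ (sub_nonneg.2 hyT)
    positivity
  rw [slabBarrier]
  linarith

end slabBarrier

section HalfSpace

variable {u : EuclideanSpace ℝ (Fin n) → ℝ} {i : Fin n} {C M : ℝ}

theorem not_isLocalMax_sub_slabBarrier {ε δ T : ℝ} {p : EuclideanSpace ℝ (Fin n)}
    (hu : ContDiffAt ℝ 2 u p) (hsub : 0 ≤ lap u p) (hδ : 0 < δ) :
    ¬IsLocalMax (u - slabBarrier i ε δ T) p := fun hmax => by
  have hb := (contDiff_slabBarrier i ε δ T).contDiffAt (x := p)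
  have hlap := hmax.laplacian_nonpos (hu.sub hb)
  rw [hu.laplacian_sub hb, laplacian_slabBarrier, ← hu.lap_eq_laplacian] at hlap
  linarith

theorem le_add_slabBarrier (hcont : ContinuousOn u {y | 0 ≤ y i})
    (hC2 : ContDiffOn ℝ 2 u {y | 0 < y i}) (hsub : ∀ y, 0 < y i → 0 ≤ lap u y)
    (hC : ∀ y, 0 ≤ y i → u y ≤ C) (hM : ∀ y, y i = 0 → u y ≤ M)
    {ε δ T R : ℝ} (hε : 0 ≤ ε) (hδ : 0 < δ) (hT : C - M ≤ ε * T) (hR : C - M ≤ δ * R ^ 2)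
    {x : EuclideanSpace ℝ (Fin n)} (hx₀ : 0 ≤ x i) (hxT : x i ≤ T) (hxR : ‖x‖ ≤ R) :
    u x ≤ M + slabBarrier i ε δ T x := by
  set K := {y : EuclideanSpace ℝ (Fin n) | 0 ≤ y i ∧ y i ≤ T} ∩ closedBall 0 R
  have hcoord : Continuous fun y : EuclideanSpace ℝ (Fin n) => y i := by fun_prop
  have hK : IsCompact K := (isCompact_closedBall 0 R).inter_left
    ((isClosed_le continuous_const hcoord).inter (isClosed_le hcoord continuous_const))
  have hxK : x ∈ K := ⟨⟨hx₀, hxT⟩, mem_closedBall_zero_iff.2 hxR⟩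
  obtain ⟨p, ⟨⟨hp₀, hpT⟩, hpR⟩, hmax⟩ := hK.exists_isMaxOn ⟨x, hxK⟩
    ((hcont.mono fun y hy => hy.1.1).sub (contDiff_slabBarrier i ε δ T).continuous.continuousOn)
  rw [mem_closedBall_zero_iff] at hpR
  suffices u p - slabBarrier i ε δ T p ≤ M by
    have : u x - slabBarrier i ε δ T x ≤ u p - slabBarrier i ε δ T p := hmax hxK
    linarith
  have hbar := le_slabBarrier ε hδ.le hp₀ hpT
  have hup := hC p hp₀
  have hεp : 0 ≤ ε * p i := mul_nonneg hε hp₀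
  have hδp : 0 ≤ δ * ‖p‖ ^ 2 := by positivity
  rcases hp₀.eq_or_lt with hp₀ | hp₀
  · linarith [hM p hp₀.symm]
  rcases hpT.eq_or_lt with hpT | hpT
  · rw [hpT] at hbar
    linarith
  rcases hpR.eq_or_lt with hpR | hpR
  · rw [hpR] at hbar
    linarith
  have hKp : K ∈ 𝓝 p := mem_of_superset
    (((isOpen_lt continuous_const hcoord).inter (isOpen_lt hcoord continuous_const)).inter
      (isOpen_lt continuous_norm continuous_const) |>.mem_nhds ⟨⟨hp₀, hpT⟩, hpR⟩)
    fun y hy => ⟨⟨hy.1.1.le, hy.1.2.le⟩, mem_closedBall_zero_iff.2 hy.2.le⟩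
  exact absurd (hmax.isLocalMax hKp) <| not_isLocalMax_sub_slabBarrier
    (hC2.contDiffAt ((isOpen_lt continuous_const hcoord).mem_nhds hp₀)) (hsub p hp₀) hδ

theorem le_of_le_on_boundary_halfSpace (hcont : ContinuousOn u {y | 0 ≤ y i})
    (hC2 : ContDiffOn ℝ 2 u {y | 0 < y i}) (hsub : ∀ y, 0 < y i → 0 ≤ lap u y)
    (hC : ∀ y, 0 ≤ y i → u y ≤ C) (hM : ∀ y, y i = 0 → u y ≤ M)
    {x : EuclideanSpace ℝ (Fin n)} (hx : 0 ≤ x i) : u x ≤ M := by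
  refine le_of_forall_pos_le_add_mul (c := x i) fun ε hε => ?_
  obtain ⟨T, hxT, hT⟩ : ∃ T, x i ≤ T ∧ C - M ≤ ε * T :=
    ((eventually_ge_atTop _).and ((tendsto_id.const_mul_atTop hε).eventually_ge_atTop _)).exists
  refine le_of_forall_pos_le_add_mul (c := ‖x‖ ^ 2 + (n + 1) * (x i * (T - x i))) fun δ hδ => ?_
  obtain ⟨R, hxR, hR⟩ : ∃ R, ‖x‖ ≤ R ∧ C - M ≤ δ * R ^ 2 :=
    ((eventually_ge_atTop _).and (((tendsto_pow_atTop two_ne_zero).const_mul_atTop hδ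
      ).eventually_ge_atTop _)).exists
  have := le_add_slabBarrier hcont hC2 hsub hC hM hε.le hδ hT hR hx hxT hxR
  rw [slabBarrier] at this
  linarith

end HalfSpace

theorem ahlfors_max_principle_halfspace_general (m : ℕ)
    (u : EuclideanSpace ℝ (Fin (m + 1)) → ℝ)
    (H : Set (EuclideanSpace ℝ (Fin (m + 1))))
    (hH : H = {x : EuclideanSpace ℝ (Fin (m + 1)) | 0 ≤ x (Fin.last m)})
    (hbd : ∃ C : ℝ, ∀ x ∈ H, |u x| ≤ C)
    (hcont : ContinuousOn u H)
    (hC2 : ContDiffOn ℝ 2 u {x : EuclideanSpace ℝ (Fin (m + 1)) | 0 < x (Fin.last m)})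
    (hsub : ∀ x : EuclideanSpace ℝ (Fin (m + 1)), 0 < x (Fin.last m) → 0 ≤ lap u x) :
    sSup (u '' H) =
      sSup (u '' {x : EuclideanSpace ℝ (Fin (m + 1)) | x (Fin.last m) = 0}) := by
  subst hH
  obtain ⟨C, hC⟩ := hbd
  have hboundary : {x : EuclideanSpace ℝ (Fin (m + 1)) | x (Fin.last m) = 0} ⊆
      {x | 0 ≤ x (Fin.last m)} := fun x hx => hx.ge
  have hne : (u '' {x : EuclideanSpace ℝ (Fin (m + 1)) | x (Fin.last m) = 0}).Nonempty :=
    ⟨u 0, 0, by simp, rfl⟩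
  have hbdd : BddAbove (u '' {x | 0 ≤ x (Fin.last m)}) :=
    ⟨C, by rintro _ ⟨x, hx, rfl⟩; exact (abs_le.1 (hC x hx)).2⟩
  refine le_antisymm (csSup_le (hne.mono (Set.image_mono hboundary)) ?_)
    (csSup_le_csSup hbdd hne (Set.image_mono hboundary))
  rintro _ ⟨x, hx, rfl⟩
  exact le_of_le_on_boundary_halfSpace hcont hC2 hsub (fun y hy => (abs_le.1 (hC y hy)).2)
    (fun y hy => le_csSup (hbdd.mono (Set.image_mono hboundary)) ⟨y, hy, rfl⟩) hx

/-- Ahlfors maximum principle on the Dirichlet parabolic half space: a bounded continuous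
function on the closed upper half space of `ℝ^{m+1}` which is `C²` with `Δu ≥ 0` on the open
half space attains its supremum on the boundary hyperplane. -/
theorem ahlfors_max_principle_halfspace (m : ℕ) (hm : 1 ≤ m)
    (u : EuclideanSpace ℝ (Fin (m + 1)) → ℝ)
    (H : Set (EuclideanSpace ℝ (Fin (m + 1))))
    (hH : H = {x : EuclideanSpace ℝ (Fin (m + 1)) | 0 ≤ x (Fin.last m)})
    (hbd : ∃ C : ℝ, ∀ x ∈ H, |u x| ≤ C)
    (hcont : ContinuousOn u H)
    (hC2 : ContDiffOn ℝ 2 u {x : EuclideanSpace ℝ (Fin (m + 1)) | 0 < x (Fin.last m)})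
    (hsub : ∀ x : EuclideanSpace ℝ (Fin (m + 1)), 0 < x (Fin.last m) → 0 ≤ lap u x) :
    sSup (u '' H) =
      sSup (u '' {x : EuclideanSpace ℝ (Fin (m + 1)) | x (Fin.last m) = 0}) :=
  ahlfors_max_principle_halfspace_general m u H hH hbd hcont hC2 hsub
end

section
/- For every integer m ≥ 3 and all real numbers a ≥ 3 and r ≥ 0, the following inequality holds: (r² + (a−1)²)^{−(m−2)/2} − (r² + (a+1)²)^{−(m−2)/2} ≥ (m−2)·(a+1)·(r² + (a+1)²)^{−m/2}. -/
/-!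
The function `t ↦ t ^ (-p)` is convex on `(0, ∞)` for `p ≥ 0`, so it lies above its tangent line
at `B = r² + (a+1)²`; evaluated at `A = r² + (a-1)²` this gives
`A ^ (-p) - B ^ (-p) ≥ p (B - A) B ^ (-(p+1))` with `p = (m-2)/2` and `B - A = 4a ≥ 2(a+1)`.
The tangent-line inequality itself is Bernoulli's inequality with exponent `p + 1 ≥ 1`.
-/

open Real

theorem one_add_mul_one_sub_le_rpow_neg {x p : ℝ} (hx : 0 < x) (hp : 0 ≤ p) :
    1 + p * (1 - x) ≤ x ^ (-p) := by
  have bernoulli : 1 + (p + 1) * (x⁻¹ - 1) ≤ x⁻¹ ^ (p + 1) := by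
    simpa using one_add_mul_self_le_rpow_one_add (s := x⁻¹ - 1) (by simp [hx.le]) (by linarith)
  calc 1 + p * (1 - x) = (1 + (p + 1) * (x⁻¹ - 1)) * x := by field_simp; ring
    _ ≤ x⁻¹ ^ (p + 1) * x := by gcongr
    _ = x ^ (-p) := by
      rw [inv_rpow hx.le, ← rpow_neg hx.le, neg_add, rpow_add hx, rpow_neg_one,
        inv_mul_cancel_right₀ hx.ne']

theorem mul_sub_mul_rpow_neg_le_rpow_neg_sub {A B p : ℝ} (hA : 0 < A) (hB : 0 < B) (hp : 0 ≤ p) :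
    p * (B - A) * B ^ (-(p + 1)) ≤ A ^ (-p) - B ^ (-p) := by
  have hA_eq : A ^ (-p) = (A / B) ^ (-p) * B ^ (-p) := by
    rw [← mul_rpow (div_pos hA hB).le hB.le, div_mul_cancel₀ A hB.ne']
  have hB_eq : B ^ (-(p + 1)) = B ^ (-p) / B := by
    rw [neg_add, rpow_add hB, rpow_neg_one, div_eq_mul_inv]
  have tangent := one_add_mul_one_sub_le_rpow_neg (div_pos hA hB) hp
  calc p * (B - A) * B ^ (-(p + 1)) = (1 + p * (1 - A / B)) * B ^ (-p) - B ^ (-p) := by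
        rw [hB_eq]; field_simp; ring
    _ ≤ (A / B) ^ (-p) * B ^ (-p) - B ^ (-p) := by gcongr
    _ = A ^ (-p) - B ^ (-p) := by rw [hA_eq]

theorem green_kernel_pointwise_lower_bound_general (m : ℕ) (hm : 3 ≤ m) (a r : ℝ)
    (ha : 3 ≤ a) :
    ((m : ℝ) - 2) * (a + 1) * (r ^ 2 + (a + 1) ^ 2) ^ (-(m : ℝ) / 2) ≤
      (r ^ 2 + (a - 1) ^ 2) ^ (-((m : ℝ) - 2) / 2) -
        (r ^ 2 + (a + 1) ^ 2) ^ (-((m : ℝ) - 2) / 2) := by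
  have hm' : (3 : ℝ) ≤ m := by exact_mod_cast hm
  set p : ℝ := ((m : ℝ) - 2) / 2 with hp_def
  set A := r ^ 2 + (a - 1) ^ 2 with hA_def
  set B := r ^ 2 + (a + 1) ^ 2 with hB_def
  have hp : 0 ≤ p := by rw [hp_def]; linarith
  have hA : 0 < A := by nlinarith [sq_nonneg r]
  have hB : 0 < B := by positivity
  have hcoef : ((m : ℝ) - 2) * (a + 1) ≤ p * (B - A) := by
    rw [hp_def, hA_def, hB_def]; nlinarith
  rw [show -(m : ℝ) / 2 = -(p + 1) by ring, show -((m : ℝ) - 2) / 2 = -p by ring]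
  calc ((m : ℝ) - 2) * (a + 1) * B ^ (-(p + 1)) ≤ p * (B - A) * B ^ (-(p + 1)) := by gcongr
    _ ≤ A ^ (-p) - B ^ (-p) := mul_sub_mul_rpow_neg_le_rpow_neg_sub hA hB hp

/-- Mean value theorem estimate for `ξ ↦ (r² + ξ²)^{-(m-2)/2}` on `[a-1, a+1]`: for every
integer `m ≥ 3` and reals `a ≥ 3`, `r ≥ 0`,
`(r² + (a-1)²)^{-(m-2)/2} - (r² + (a+1)²)^{-(m-2)/2} ≥ (m-2)·(a+1)·(r² + (a+1)²)^{-m/2}`. -/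
theorem green_kernel_pointwise_lower_bound (m : ℕ) (hm : 3 ≤ m) (a r : ℝ)
    (ha : 3 ≤ a) (hr : 0 ≤ r) :
    ((m : ℝ) - 2) * (a + 1) * (r ^ 2 + (a + 1) ^ 2) ^ (-(m : ℝ) / 2) ≤
      (r ^ 2 + (a - 1) ^ 2) ^ (-((m : ℝ) - 2) / 2) -
        (r ^ 2 + (a + 1) ^ 2) ^ (-((m : ℝ) - 2) / 2) :=
  green_kernel_pointwise_lower_bound_general m hm a r ha
end

section
/- Let m ≥ 2 be an integer, let 0 < λ < 2m, set α = (−(m−2) + √((m−2)² + 4λ))/2, and for R > 1 define h_R : [0,R] → ℝ by h_R(r) = (1/(2m−λ))·((r/R)^α · R² − r²). Then: (a) 0 < α < 2 and α² + (m−2)α = λ; (b) for every r ∈ (0,R), h_R''(r) + ((m−1)/r)·h_R'(r) − (λ/r²)·h_R(r) = −1; (c) h_R(0) = h_R(R) = 0 and h_R(r) > 0 for r ∈ (0,R); (d) h_R(1) = (R^{2−α} − 1)/(2m−λ), which tends to +∞ as R → +∞. -/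
/-!
On `r > 0` the radial operator `L f = f'' + ((m-1)/r) f' - (λ/r²) f` acts on powers by
`L rᵖ = (p² + (m-2)p - λ) rᵖ⁻²`. So `rᵅ` is `L`-harmonic for the positive root `α` of the
indicial polynomial, while `L r² = 2m - λ`; `h_R` is the combination of the two normalised by
`L h_R = -1` and vanishing at `R`. Since `α < 2` (equivalent to `λ < 2m`), `(r/R)ᵅ > (r/R)²`
on `(0,R)`, which gives positivity, and `h_R(1)` grows like `R^{2-α}`.
-/

open Filter Topology

noncomputable section

def radialOp (m lam : ℝ) (f : ℝ → ℝ) (r : ℝ) : ℝ :=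
  deriv (deriv f) r + ((m - 1) / r) * deriv f r - (lam / r ^ 2) * f r

theorem radialOp_congr {m lam r : ℝ} {f g : ℝ → ℝ} (hfg : f =ᶠ[𝓝 r] g) :
    radialOp m lam f r = radialOp m lam g r := by
  simp only [radialOp, hfg.deriv.deriv_eq, hfg.deriv_eq, hfg.eq_of_nhds]

theorem hasDerivAt_const_mul_rpow_add (a b p q : ℝ) {x : ℝ} (hx : 0 < x) :
    HasDerivAt (fun y => a * y ^ p + b * y ^ q)
      (a * p * x ^ (p - 1) + b * q * x ^ (q - 1)) x := by
  have hp : HasDerivAt (fun y => a * y ^ p) (a * (p * x ^ (p - 1))) x :=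
    (Real.hasDerivAt_rpow_const (Or.inl hx.ne')).const_mul a
  have hq : HasDerivAt (fun y => b * y ^ q) (b * (q * x ^ (q - 1))) x :=
    (Real.hasDerivAt_rpow_const (Or.inl hx.ne')).const_mul b
  exact (hp.add hq).congr_deriv (by ring)

theorem radialOp_const_mul_rpow_add (m lam a b p q : ℝ) {r : ℝ} (hr : 0 < r) :
    radialOp m lam (fun y => a * y ^ p + b * y ^ q) r =
      a * (p ^ 2 + (m - 2) * p - lam) * r ^ (p - 2) +
        b * (q ^ 2 + (m - 2) * q - lam) * r ^ (q - 2) := by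
  have hderiv : deriv (fun y => a * y ^ p + b * y ^ q) =ᶠ[𝓝 r]
      fun y => a * p * y ^ (p - 1) + b * q * y ^ (q - 1) :=
    eventually_of_mem (Ioi_mem_nhds hr) fun y hy =>
      (hasDerivAt_const_mul_rpow_add a b p q hy).deriv
  have hderiv2 := (hasDerivAt_const_mul_rpow_add (a * p) (b * q) (p - 1) (q - 1) hr).deriv
  have hsub_one (s : ℝ) : r ^ (s - 1) = r ^ (s - 2) * r := by
    rw [← Real.rpow_add_one hr.ne']
    ring_nf
  have hself (s : ℝ) : r ^ s = r ^ (s - 2) * r ^ 2 := by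
    rw [← Real.rpow_natCast, ← Real.rpow_add hr]
    ring_nf
  rw [radialOp, hderiv.deriv_eq, hderiv2, (hasDerivAt_const_mul_rpow_add a b p q hr).deriv,
    show p - 1 - 1 = p - 2 by ring, show q - 1 - 1 = q - 2 by ring,
    hsub_one p, hsub_one q, hself p, hself q]
  field_simp
  ring

def indicialRoot (b lam : ℝ) : ℝ := (-b + √(b ^ 2 + 4 * lam)) / 2

theorem indicialRoot_sq_add_mul (b : ℝ) {lam : ℝ} (hlam : 0 ≤ lam) :
    indicialRoot b lam ^ 2 + b * indicialRoot b lam = lam := by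
  have hsq := Real.sq_sqrt (show 0 ≤ b ^ 2 + 4 * lam by positivity)
  rw [indicialRoot]
  linear_combination hsq / 4

theorem indicialRoot_pos (b : ℝ) {lam : ℝ} (hlam : 0 < lam) : 0 < indicialRoot b lam := by
  have : b < √(b ^ 2 + 4 * lam) := Real.lt_sqrt_of_sq_lt (by linarith)
  rw [indicialRoot]
  linarith

theorem indicialRoot_lt_two {b lam : ℝ} (hlam₀ : 0 ≤ lam) (hlam : lam < 2 * b + 4) :
    indicialRoot b lam < 2 := by
  have : √(b ^ 2 + 4 * lam) < b + 4 := by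
    rw [Real.sqrt_lt' (by linarith)]
    nlinarith
  rw [indicialRoot]
  linarith

theorem div_rpow_mul_sq {R r : ℝ} (hR : 0 < R) (hr : 0 ≤ r) (α : ℝ) :
    (r / R) ^ α * R ^ 2 = R ^ (2 - α) * r ^ α := by
  rw [Real.div_rpow hr hR.le, Real.rpow_sub hR, Real.rpow_two]
  field_simp

theorem sq_lt_div_rpow_mul_sq {R r α : ℝ} (hr : 0 < r) (hrR : r < R) (hα : α < 2) :
    r ^ 2 < (r / R) ^ α * R ^ 2 := by
  have hR : 0 < R := hr.trans hrR
  have hlt : (r / R) ^ (2 : ℝ) < (r / R) ^ α :=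
    Real.rpow_lt_rpow_of_exponent_gt (div_pos hr hR) ((div_lt_one hR).2 hrR) hα
  calc r ^ 2 = (r / R) ^ (2 : ℝ) * R ^ 2 := by rw [Real.rpow_two]; field_simp
    _ < (r / R) ^ α * R ^ 2 := by gcongr

theorem radialOp_exitProfile {m lam α R r : ℝ} (hα : α ^ 2 + (m - 2) * α = lam)
    (hlam : 2 * m - lam ≠ 0) (hR : 0 < R) (hr : 0 < r) :
    radialOp m lam (fun x => 1 / (2 * m - lam) * ((x / R) ^ α * R ^ 2 - x ^ 2)) r = -1 := by
  set c := 1 / (2 * m - lam)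
  have hpow : (fun x => c * ((x / R) ^ α * R ^ 2 - x ^ 2)) =ᶠ[𝓝 r]
      fun x => c * R ^ (2 - α) * x ^ α + -c * x ^ (2 : ℝ) :=
    eventually_of_mem (Ioi_mem_nhds hr) fun x hx => by
      dsimp only
      rw [div_rpow_mul_sq hR (le_of_lt hx), Real.rpow_two]
      ring
  rw [radialOp_congr hpow, radialOp_const_mul_rpow_add m lam _ _ _ _ hr, hα]
  norm_num [c]
  field_simp
  ring

end

theorem cone_exit_time_radial_ode_general (m : ℕ) (lam : ℝ)
    (hlam₀ : 0 < lam) (hlam₁ : lam < 2 * m)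
    (alpha : ℝ)
    (halpha : alpha = (-((m : ℝ) - 2) + Real.sqrt (((m : ℝ) - 2) ^ 2 + 4 * lam)) / 2)
    (h : ℝ → ℝ → ℝ)
    (hh : ∀ R r : ℝ, h R r = (1 / (2 * m - lam)) * ((r / R) ^ alpha * R ^ 2 - r ^ 2)) :
    (0 < alpha ∧ alpha < 2 ∧ alpha ^ 2 + ((m : ℝ) - 2) * alpha = lam) ∧
    (∀ R : ℝ, 1 < R → ∀ r ∈ Set.Ioo (0 : ℝ) R,
      deriv (deriv (h R)) r + (((m : ℝ) - 1) / r) * deriv (h R) r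
        - (lam / r ^ 2) * h R r = -1) ∧
    (∀ R : ℝ, 1 < R → h R 0 = 0 ∧ h R R = 0 ∧ ∀ r ∈ Set.Ioo (0 : ℝ) R, 0 < h R r) ∧
    (∀ R : ℝ, 1 < R → h R 1 = (R ^ (2 - alpha) - 1) / (2 * m - lam)) ∧
    Filter.Tendsto (fun R : ℝ => h R 1) Filter.atTop Filter.atTop := by
  obtain rfl : alpha = indicialRoot ((m : ℝ) - 2) lam := halpha
  have hα₀ := indicialRoot_pos ((m : ℝ) - 2) hlam₀
  have hα₂ := indicialRoot_lt_two (b := (m : ℝ) - 2) hlam₀.le (by linarith)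
  have hquad := indicialRoot_sq_add_mul ((m : ℝ) - 2) hlam₀.le
  have hc : 0 < 2 * (m : ℝ) - lam := by linarith
  have hval (R : ℝ) (hR : 1 < R) :
      h R 1 = (R ^ (2 - indicialRoot ((m : ℝ) - 2) lam) - 1) / (2 * m - lam) := by
    rw [hh, div_rpow_mul_sq (by linarith) zero_le_one, Real.one_rpow]
    ring
  refine ⟨⟨hα₀, hα₂, hquad⟩, fun R hR r hr => ?_, fun R hR => ⟨?_, ?_, fun r hr => ?_⟩, hval, ?_⟩
  · rw [funext (hh R)]
    exact radialOp_exitProfile hquad hc.ne' (by linarith) hr.1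
  · simp [hh, Real.zero_rpow hα₀.ne']
  · simp [hh, div_self (by linarith : R ≠ 0)]
  · rw [hh]
    exact mul_pos (by positivity) (sub_pos.2 (sq_lt_div_rpow_mul_sq hr.1 hr.2 hα₂))
  · refine Tendsto.congr' (eventually_gt_atTop 1 |>.mono fun R hR => (hval R hR).symm) ?_
    exact (tendsto_atTop_add_const_right _ (-1) (tendsto_rpow_atTop (by linarith))).atTop_div_const hc

/-- Radial solution of the cone mean exit time equation when `λ < 2m`: with
`α = (-(m-2) + √((m-2)² + 4λ))/2` and `h_R(r) = (1/(2m-λ))·((r/R)^α·R² - r²)`, one has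
(a) `0 < α < 2` and `α² + (m-2)α = λ`; (b) `h_R'' + ((m-1)/r)h_R' - (λ/r²)h_R = -1` on `(0,R)`;
(c) `h_R(0) = h_R(R) = 0` and `h_R > 0` on `(0,R)`; (d) `h_R(1) = (R^{2-α} - 1)/(2m-λ) → +∞`
as `R → +∞`. -/
theorem cone_exit_time_radial_ode (m : ℕ) (hm : 2 ≤ m) (lam : ℝ)
    (hlam₀ : 0 < lam) (hlam₁ : lam < 2 * m)
    (alpha : ℝ)
    (halpha : alpha = (-((m : ℝ) - 2) + Real.sqrt (((m : ℝ) - 2) ^ 2 + 4 * lam)) / 2)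
    (h : ℝ → ℝ → ℝ)
    (hh : ∀ R r : ℝ, h R r = (1 / (2 * m - lam)) * ((r / R) ^ alpha * R ^ 2 - r ^ 2)) :
    (0 < alpha ∧ alpha < 2 ∧ alpha ^ 2 + ((m : ℝ) - 2) * alpha = lam) ∧
    (∀ R : ℝ, 1 < R → ∀ r ∈ Set.Ioo (0 : ℝ) R,
      deriv (deriv (h R)) r + (((m : ℝ) - 1) / r) * deriv (h R) r
        - (lam / r ^ 2) * h R r = -1) ∧
    (∀ R : ℝ, 1 < R → h R 0 = 0 ∧ h R R = 0 ∧ ∀ r ∈ Set.Ioo (0 : ℝ) R, 0 < h R r) ∧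
    (∀ R : ℝ, 1 < R → h R 1 = (R ^ (2 - alpha) - 1) / (2 * m - lam)) ∧
    Filter.Tendsto (fun R : ℝ => h R 1) Filter.atTop Filter.atTop :=
  cone_exit_time_radial_ode_general m lam hlam₀ hlam₁ alpha halpha h hh
end

section
/- Let m ≥ 1 be an integer and for R > 1 define h_R : [1,R] → ℝ by h_R(r) = (1/(m+2))·[ (R^{m+2}/(R^{m+2}−1))·(r² − r^{−m})·log R − r²·log r ]. Then: (a) for every r ∈ (1,R), h_R''(r) + ((m−1)/r)·h_R'(r) − (2m/r²)·h_R(r) = −1; (b) h_R(1) = h_R(R) = 0; (c) h_R(2) → +∞ as R → +∞. -/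
/-!
On `f = r^α` the operator `f'' + ((m-1)/r) f' - (2m/r²) f` acts as multiplication by
`(α - 2)(α + m) r^{-2}`, so `r²` and `r^{-m}` solve the homogeneous equation. A constant right-hand
side corresponds to the indicial root `α = 2`, so the particular solution carries a logarithm: the
operator sends `r² log r` to the constant `m + 2`. The multiple of `r² - r^{-m}` is fixed by
`h_R(R) = 0`, and its coefficient `(R^{m+2}/(R^{m+2}-1)) log R` grows like `log R`, which drives
`h_R(2)` to infinity.
-/

open Real Filter

noncomputable section

variable (a b m : ℝ)

def borderlineRadial (r : ℝ) : ℝ := a * (r ^ 2 - r ^ (-m)) - b * (r ^ 2 * log r)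

def borderlineRadialDeriv (r : ℝ) : ℝ :=
  a * (2 * r + m * r ^ (-m - 1)) - b * (2 * r * log r + r)

variable {a b m}

theorem hasDerivAt_borderlineRadial {r : ℝ} (hr : 0 < r) :
    HasDerivAt (borderlineRadial a b m) (borderlineRadialDeriv a b m r) r := by
  have hsq : HasDerivAt (fun y : ℝ => y ^ 2) (2 * r) r := by
    simpa [mul_comm] using hasDerivAt_pow 2 r
  have hneg : HasDerivAt (fun y : ℝ => y ^ (-m)) (-m * r ^ (-m - 1)) r :=
    hasDerivAt_rpow_const (Or.inl hr.ne')
  have hlog : HasDerivAt (fun y : ℝ => y ^ 2 * log y) (2 * r * log r + r) r := by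
    refine (hsq.mul (hasDerivAt_log hr.ne')).congr_deriv ?_
    field_simp
  refine (((hsq.sub hneg).const_mul a).sub (hlog.const_mul b)).congr_deriv ?_
  rw [borderlineRadialDeriv]
  ring

theorem hasDerivAt_borderlineRadialDeriv {r : ℝ} (hr : 0 < r) :
    HasDerivAt (borderlineRadialDeriv a b m)
      (a * (2 - m * (m + 1) * r ^ (-m - 2)) - b * (2 * log r + 3)) r := by
  have hlin : HasDerivAt (fun y : ℝ => 2 * y) 2 r := by
    simpa using (hasDerivAt_id r).const_mul (2 : ℝ)
  have hneg : HasDerivAt (fun y : ℝ => y ^ (-m - 1)) ((-m - 1) * r ^ (-m - 1 - 1)) r :=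
    hasDerivAt_rpow_const (Or.inl hr.ne')
  have hlog : HasDerivAt (fun y : ℝ => 2 * y * log y + y) (2 * log r + 3) r := by
    refine ((hlin.mul (hasDerivAt_log hr.ne')).add (hasDerivAt_id r)).congr_deriv ?_
    field_simp
    ring
  refine (((hlin.add (hneg.const_mul m)).const_mul a).sub (hlog.const_mul b)).congr_deriv ?_
  rw [show -m - 1 - 1 = -m - 2 by ring]
  ring

theorem borderlineRadial_ode {r : ℝ} (hr : 0 < r) :
    deriv (deriv (borderlineRadial a b m)) r + ((m - 1) / r) * deriv (borderlineRadial a b m) r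
      - (2 * m / r ^ 2) * borderlineRadial a b m r = -((m + 2) * b) := by
  have hderiv : deriv (borderlineRadial a b m) =ᶠ[nhds r] borderlineRadialDeriv a b m := by
    filter_upwards [eventually_gt_nhds hr] with y hy
    exact (hasDerivAt_borderlineRadial hy).deriv
  rw [hderiv.deriv_eq, (hasDerivAt_borderlineRadialDeriv hr).deriv,
    (hasDerivAt_borderlineRadial hr).deriv, borderlineRadial, borderlineRadialDeriv,
    rpow_sub hr, rpow_sub hr, rpow_one, rpow_two]
  field_simp
  ring

theorem borderlineRadial_one : borderlineRadial a b m 1 = 0 := by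
  simp [borderlineRadial]

end

theorem borderlineRadial_self {R : ℝ} (hR : 0 < R) (n : ℕ) (hRn : R ^ (n + 2) ≠ 1) {b : ℝ} :
    borderlineRadial (R ^ (n + 2) / (R ^ (n + 2) - 1) * log R * b) b n R = 0 := by
  have hsub : R ^ (n + 2) - 1 ≠ 0 := sub_ne_zero.mpr hRn
  rw [borderlineRadial, rpow_neg hR.le, rpow_natCast]
  field_simp
  ring

theorem mul_sub_log_two_le_borderlineRadial_two {R : ℝ} (hR : 1 < R) (n : ℕ) {b : ℝ}
    (hb : 0 ≤ b) :
    b * (3 * log R - 4 * log 2) ≤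
      borderlineRadial (R ^ (n + 2) / (R ^ (n + 2) - 1) * log R * b) b n 2 := by
  have hpow : 1 < R ^ (n + 2) := one_lt_pow₀ hR (by omega)
  have hratio : 1 ≤ R ^ (n + 2) / (R ^ (n + 2) - 1) :=
    (one_le_div (by linarith)).mpr (by linarith)
  have hcoef : 3 ≤ (2 : ℝ) ^ 2 - 2 ^ (-(n : ℝ)) := by
    linarith [rpow_le_one_of_one_le_of_nonpos one_le_two (by simp : -(n : ℝ) ≤ 0)]
  have hgrowth : 3 * log R ≤ R ^ (n + 2) / (R ^ (n + 2) - 1) * (2 ^ 2 - 2 ^ (-(n : ℝ))) * log R :=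
    mul_le_mul_of_nonneg_right (hcoef.trans (le_mul_of_one_le_left (by linarith) hratio))
      (log_nonneg hR.le)
  rw [borderlineRadial]
  nlinarith [mul_le_mul_of_nonneg_left hgrowth hb]

theorem cone_exit_time_radial_ode_borderline_general (m : ℕ)
    (h : ℝ → ℝ → ℝ)
    (hh : ∀ R r : ℝ, h R r = (1 / ((m : ℝ) + 2)) *
      ((R ^ (m + 2) / (R ^ (m + 2) - 1)) * (r ^ 2 - r ^ (-(m : ℝ))) * Real.log R
        - r ^ 2 * Real.log r)) :
    (∀ R : ℝ, 1 < R → ∀ r ∈ Set.Ioo (1 : ℝ) R,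
      deriv (deriv (h R)) r + (((m : ℝ) - 1) / r) * deriv (h R) r
        - ((2 * m : ℝ) / r ^ 2) * h R r = -1) ∧
    (∀ R : ℝ, 1 < R → h R 1 = 0 ∧ h R R = 0) ∧
    Filter.Tendsto (fun R : ℝ => h R 2) Filter.atTop Filter.atTop := by
  set b : ℝ := 1 / ((m : ℝ) + 2)
  have hb : 0 < b := by positivity
  have hmb : ((m : ℝ) + 2) * b = 1 := mul_one_div_cancel (by positivity)
  have hprofile (R : ℝ) :
      h R = borderlineRadial (R ^ (m + 2) / (R ^ (m + 2) - 1) * log R * b) b m := by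
    ext r
    rw [hh, borderlineRadial]
    ring
  refine ⟨fun R _ r hr => ?_, fun R hR => ?_, ?_⟩
  · rw [hprofile, borderlineRadial_ode (by linarith [hr.1]), hmb]
  · rw [hprofile]
    exact ⟨borderlineRadial_one,
      borderlineRadial_self (by linarith) m (one_lt_pow₀ hR (by omega)).ne'⟩
  · have hlower : ∀ᶠ R in atTop, b * (3 * log R - 4 * log 2) ≤ h R 2 := by
      filter_upwards [eventually_gt_atTop 1] with R hR
      rw [hprofile]
      exact mul_sub_log_two_le_borderlineRadial_two hR m hb.le
    refine tendsto_atTop_mono' atTop hlower (Tendsto.const_mul_atTop hb ?_)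
    exact tendsto_atTop_add_const_right atTop _ (tendsto_log_atTop.const_mul_atTop (by norm_num))

/-- Radial solution of the cone mean exit time equation in the borderline case `λ = 2m`: with
`h_R(r) = (1/(m+2))·[(R^{m+2}/(R^{m+2}-1))·(r² - r^{-m})·log R - r²·log r]`, one has
(a) `h_R'' + ((m-1)/r)h_R' - (2m/r²)h_R = -1` on `(1,R)`; (b) `h_R(1) = h_R(R) = 0`;
(c) `h_R(2) → +∞` as `R → +∞`. -/
theorem cone_exit_time_radial_ode_borderline (m : ℕ) (hm : 1 ≤ m)
    (h : ℝ → ℝ → ℝ)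
    (hh : ∀ R r : ℝ, h R r = (1 / ((m : ℝ) + 2)) *
      ((R ^ (m + 2) / (R ^ (m + 2) - 1)) * (r ^ 2 - r ^ (-(m : ℝ))) * Real.log R
        - r ^ 2 * Real.log r)) :
    (∀ R : ℝ, 1 < R → ∀ r ∈ Set.Ioo (1 : ℝ) R,
      deriv (deriv (h R)) r + (((m : ℝ) - 1) / r) * deriv (h R) r
        - ((2 * m : ℝ) / r ^ 2) * h R r = -1) ∧
    (∀ R : ℝ, 1 < R → h R 1 = 0 ∧ h R R = 0) ∧
    Filter.Tendsto (fun R : ℝ => h R 2) Filter.atTop Filter.atTop :=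
  cone_exit_time_radial_ode_borderline_general m h hh
end

section
/- Let B̄ ≥ 1/2 be a real number and t > 0. Define σ : [0,t) → ℝ by σ(s) = (1/(2B̄))·t^{1/2+B̄}·(t−s)^{1/2−B̄}·(1 − (1 − s/t)^{2B̄}). Then σ(s) ≥ d̄·s for every s ∈ [0,t), where d̄ = min{ 2^{1−2B̄}, (1 − 2^{−2B̄})/(2B̄) } > 0 depends only on B̄. More precisely, σ(s) ≥ 2^{1−2B̄}·s for s ∈ [0, t/2] and σ(s) ≥ ((1 − 2^{−2B̄})/(2B̄))·s for s ∈ [t/2, t). -/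
/-!
Substituting `u = 1 - s/t` turns `σ(s)` into `t · u^{1/2-B} (1 - u^{2B}) / (2B)` and `s` into
`t (1 - u)`. For `u ≥ 1/2` the tangent line of the convex function `x ↦ x^{2B}` at `u`,
evaluated at `1`, gives `1 - u^{2B} ≥ 2B u^{2B-1} (1 - u)`, so
`σ(s) ≥ u^{B-1/2} s ≥ 2^{1-2B} s`.
For `u ≤ 1/2` the factor `u^{1/2-B}` is at least `1` and `u^{2B} ≤ 2^{-2B}`, so
`σ(s) ≥ t (1 - 2^{-2B}) / (2B) ≥ s (1 - 2^{-2B}) / (2B)`.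
-/

open Real

lemma mul_rpow_sub_one_mul_one_sub_le_one_sub_rpow {u p : ℝ} (hu : 0 < u) (hp : 1 ≤ p) :
    p * u ^ (p - 1) * (1 - u) ≤ 1 - u ^ p := by
  have bernoulli := one_add_mul_self_le_rpow_one_add (s := u⁻¹ - 1)
    (by linarith [inv_pos.mpr hu]) hp
  rw [add_sub_cancel, inv_rpow hu.le] at bernoulli
  have hup : 0 < u ^ p := rpow_pos_of_pos hu p
  have scaled := mul_le_mul_of_nonneg_left bernoulli hup.le
  rw [mul_inv_cancel₀ hup.ne'] at scaled
  rw [rpow_sub_one hu.ne']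
  have expand : u ^ p * (1 + p * (u⁻¹ - 1)) = u ^ p + p * (u ^ p / u) * (1 - u) := by
    field_simp
  linarith

lemma half_rpow_eq_two_rpow_neg (x : ℝ) : (1 / 2 : ℝ) ^ x = 2 ^ (-x) := by
  rw [one_div, inv_rpow zero_le_two, rpow_neg zero_le_two]

lemma one_sub_two_rpow_neg_div_pos {B : ℝ} (hB : 0 < B) :
    0 < (1 - (2 : ℝ) ^ (-(2 * B))) / (2 * B) :=
  div_pos (sub_pos.mpr (rpow_lt_one_of_one_lt_of_neg one_lt_two (by linarith))) (by linarith)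

noncomputable def warpProfile (B u : ℝ) : ℝ :=
  u ^ ((1 : ℝ) / 2 - B) * (1 - u ^ (2 * B)) / (2 * B)

lemma warping_eq_mul_warpProfile (B : ℝ) {t s : ℝ} (ht : 0 < t) (hst : s ≤ t) :
    (1 / (2 * B)) * t ^ ((1 : ℝ) / 2 + B) * (t - s) ^ ((1 : ℝ) / 2 - B) *
      (1 - (1 - s / t) ^ (2 * B)) = t * warpProfile B (1 - s / t) := by
  have hu : 0 ≤ 1 - s / t := sub_nonneg.mpr ((div_le_one ht).mpr hst)
  have hts : t - s = t * (1 - s / t) := by field_simp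
  have ht_pow : t ^ ((1 : ℝ) / 2 + B) * t ^ ((1 : ℝ) / 2 - B) = t := by
    rw [← rpow_add ht]
    norm_num
  rw [warpProfile, hts, mul_rpow ht.le hu]
  linear_combination
    (1 - s / t) ^ ((1 : ℝ) / 2 - B) * (1 - (1 - s / t) ^ (2 * B)) / (2 * B) * ht_pow

lemma rpow_mul_one_sub_le_warpProfile {B u : ℝ} (hB : 1 / 2 ≤ B) (hu : 0 < u) :
    u ^ (B - 1 / 2) * (1 - u) ≤ warpProfile B u := by
  have h2B : 0 < 2 * B := by linarith
  have gradient := mul_rpow_sub_one_mul_one_sub_le_one_sub_rpow hu (p := 2 * B) (by linarith)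
  have split : u ^ (B - 1 / 2) = u ^ ((1 : ℝ) / 2 - B) * u ^ (2 * B - 1) := by
    rw [← rpow_add hu]
    ring_nf
  rw [warpProfile, le_div_iff₀ h2B, split]
  calc u ^ ((1 : ℝ) / 2 - B) * u ^ (2 * B - 1) * (1 - u) * (2 * B)
      = u ^ ((1 : ℝ) / 2 - B) * (2 * B * u ^ (2 * B - 1) * (1 - u)) := by ring
    _ ≤ u ^ ((1 : ℝ) / 2 - B) * (1 - u ^ (2 * B)) := by gcongr

lemma two_rpow_mul_one_sub_le_warpProfile {B u : ℝ} (hB : 1 / 2 ≤ B) (hu : 1 / 2 ≤ u)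
    (hu1 : u ≤ 1) :
    (2 : ℝ) ^ (1 - 2 * B) * (1 - u) ≤ warpProfile B u := by
  have hcoef : (2 : ℝ) ^ (1 - 2 * B) ≤ u ^ (B - 1 / 2) :=
    calc (2 : ℝ) ^ (1 - 2 * B) ≤ 2 ^ (-(B - 1 / 2)) :=
          rpow_le_rpow_of_exponent_le one_le_two (by linarith)
      _ = (1 / 2) ^ (B - 1 / 2) := (half_rpow_eq_two_rpow_neg _).symm
      _ ≤ u ^ (B - 1 / 2) := rpow_le_rpow (by norm_num) hu (by linarith)
  calc (2 : ℝ) ^ (1 - 2 * B) * (1 - u) ≤ u ^ (B - 1 / 2) * (1 - u) := by gcongr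
    _ ≤ warpProfile B u := rpow_mul_one_sub_le_warpProfile hB (by linarith)

lemma one_sub_two_rpow_div_le_warpProfile {B u : ℝ} (hB : 1 / 2 ≤ B) (hu : 0 < u)
    (hu2 : u ≤ 1 / 2) :
    (1 - (2 : ℝ) ^ (-(2 * B))) / (2 * B) ≤ warpProfile B u := by
  have hpow_le_one : 1 ≤ u ^ ((1 : ℝ) / 2 - B) :=
    one_le_rpow_of_pos_of_le_one_of_nonpos hu (by linarith) (by linarith)
  have hpow_le_half : u ^ (2 * B) ≤ (2 : ℝ) ^ (-(2 * B)) :=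
    half_rpow_eq_two_rpow_neg (2 * B) ▸ rpow_le_rpow hu.le hu2 (by linarith)
  have hgap : 0 ≤ 1 - u ^ (2 * B) := by
    linarith [rpow_le_one_of_one_le_of_nonpos one_le_two (z := -(2 * B)) (by linarith)]
  rw [warpProfile]
  gcongr
  calc 1 - (2 : ℝ) ^ (-(2 * B)) ≤ 1 - u ^ (2 * B) := by linarith
    _ ≤ u ^ ((1 : ℝ) / 2 - B) * (1 - u ^ (2 * B)) := le_mul_of_one_le_left hgap hpow_le_one

lemma two_rpow_mul_le_mul_warpProfile {B t s : ℝ} (hB : 1 / 2 ≤ B) (ht : 0 < t)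
    (hs0 : 0 ≤ s) (hs : s ≤ t / 2) :
    (2 : ℝ) ^ (1 - 2 * B) * s ≤ t * warpProfile B (1 - s / t) := by
  have key := two_rpow_mul_one_sub_le_warpProfile hB (u := 1 - s / t)
    (by rw [le_sub_comm, div_le_iff₀ ht]; linarith) (by linarith [div_nonneg hs0 ht.le])
  calc (2 : ℝ) ^ (1 - 2 * B) * s = t * ((2 : ℝ) ^ (1 - 2 * B) * (1 - (1 - s / t))) := by
        field_simp
        ring
    _ ≤ t * warpProfile B (1 - s / t) := by gcongr

lemma one_sub_two_rpow_div_mul_le_mul_warpProfile {B t s : ℝ} (hB : 1 / 2 ≤ B) (ht : 0 < t)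
    (hs : t / 2 ≤ s) (hst : s < t) :
    (1 - (2 : ℝ) ^ (-(2 * B))) / (2 * B) * s ≤ t * warpProfile B (1 - s / t) := by
  have key := one_sub_two_rpow_div_le_warpProfile hB (u := 1 - s / t)
    (sub_pos.mpr ((div_lt_one ht).mpr hst)) (by rw [sub_le_comm, le_div_iff₀ ht]; linarith)
  calc (1 - (2 : ℝ) ^ (-(2 * B))) / (2 * B) * s
      ≤ (1 - (2 : ℝ) ^ (-(2 * B))) / (2 * B) * t := by
        gcongr
        exact (one_sub_two_rpow_neg_div_pos (by linarith)).le
    _ = t * ((1 - (2 : ℝ) ^ (-(2 * B))) / (2 * B)) := mul_comm _ _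
    _ ≤ t * warpProfile B (1 - s / t) := by gcongr

/-- Linear lower bound for the comparison warping function arising from the Ricci bound
`Ric ≥ -(m-1)B²/(1+r²)`: for `B̄ ≥ 1/2`, `t > 0` and
`σ(s) = (1/(2B̄))·t^{1/2+B̄}·(t-s)^{1/2-B̄}·(1 - (1-s/t)^{2B̄})`, one has
`σ(s) ≥ 2^{1-2B̄}·s` on `[0,t/2]`, `σ(s) ≥ ((1-2^{-2B̄})/(2B̄))·s` on `[t/2,t)`, and hence
`σ(s) ≥ d̄·s` on `[0,t)` with `d̄ = min{2^{1-2B̄}, (1-2^{-2B̄})/(2B̄)} > 0`. -/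
theorem warping_function_linear_lower_bound (B : ℝ) (hB : 1 / 2 ≤ B) (t : ℝ) (ht : 0 < t)
    (σ : ℝ → ℝ)
    (hσ : ∀ s : ℝ, σ s = (1 / (2 * B)) * t ^ ((1 : ℝ) / 2 + B) *
      (t - s) ^ ((1 : ℝ) / 2 - B) * (1 - (1 - s / t) ^ (2 * B))) :
    (0 < min ((2 : ℝ) ^ (1 - 2 * B)) ((1 - (2 : ℝ) ^ (-(2 * B))) / (2 * B))) ∧
    (∀ s ∈ Set.Icc (0 : ℝ) (t / 2), (2 : ℝ) ^ (1 - 2 * B) * s ≤ σ s) ∧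
    (∀ s ∈ Set.Ico (t / 2) t, ((1 - (2 : ℝ) ^ (-(2 * B))) / (2 * B)) * s ≤ σ s) ∧
    (∀ s ∈ Set.Ico (0 : ℝ) t,
      min ((2 : ℝ) ^ (1 - 2 * B)) ((1 - (2 : ℝ) ^ (-(2 * B))) / (2 * B)) * s ≤ σ s) := by
  have near : ∀ s ∈ Set.Icc (0 : ℝ) (t / 2), (2 : ℝ) ^ (1 - 2 * B) * s ≤ σ s := by
    rintro s ⟨hs0, hs⟩
    rw [hσ, warping_eq_mul_warpProfile B ht (by linarith)]
    exact two_rpow_mul_le_mul_warpProfile hB ht hs0 hs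
  have far :
      ∀ s ∈ Set.Ico (t / 2) t, ((1 - (2 : ℝ) ^ (-(2 * B))) / (2 * B)) * s ≤ σ s := by
    rintro s ⟨hs, hst⟩
    rw [hσ, warping_eq_mul_warpProfile B ht hst.le]
    exact one_sub_two_rpow_div_mul_le_mul_warpProfile hB ht hs hst
  refine ⟨lt_min (rpow_pos_of_pos two_pos _)
    (one_sub_two_rpow_neg_div_pos (by linarith)), near, far, ?_⟩
  rintro s ⟨hs0, hst⟩
  rcases le_or_gt s (t / 2) with hs | hs
  · exact (mul_le_mul_of_nonneg_right (min_le_left _ _) hs0).trans (near s ⟨hs0, hs⟩)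
  · exact (mul_le_mul_of_nonneg_right (min_le_right _ _) hs0).trans (far s ⟨hs.le, hst⟩)
end
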